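/- arXiv:1305.2078 — 4 statements merged into one kernel-verified Lean document; each statement's English description precedes it below -/
import Mathlib

section
/- Let H be a graph on vertex set [n] whose identity labelling has bandwidth at most βn, let s ∈ [n], and suppose σ: [n] → {0,…,r} is a proper (r+1)-colouring of H such that no vertex v with s − 2βn ≤ v ≤ s + 2βn has σ(v) = 0. Then for any two distinct colours l, l′ ∈ [r] the mapping σ′: [n] → {0,…,r} defined by σ′(v) = l if σ(v) = l′ and s < v; σ′(v) = l′ if σ(v) = l and s + βn < v; σ′(v) = 0 if σ(v) = l and s − βn ≤ v ≤ s + βn; and σ′(v) = σ(v) otherwise, is a proper (r+1)-colouring of H. -/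
open Finset

namespace Paper

/-- The density `d(A,B) = e(A,B)/(|A||B|)` of a pair of vertex sets
(counting ordered pairs `(a,b) ∈ A × B` that are adjacent). -/
noncomputable def dens {V : Type*} (G : SimpleGraph V) (A B : Finset V) : ℝ :=
  (Set.ncard {p : V × V | p.1 ∈ A ∧ p.2 ∈ B ∧ G.Adj p.1 p.2} : ℝ) /
    ((A.card : ℝ) * (B.card : ℝ))

/-- The pair `(A,B)` is `ε`-regular: `|d(A,B) − d(A′,B′)| ≤ ε` for all `A′ ⊆ A`, `B′ ⊆ B`
with `|A′| ≥ ε|A|` and `|B′| ≥ ε|B|`. -/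
def EpsRegularPair {V : Type*} (G : SimpleGraph V) (ε : ℝ) (A B : Finset V) : Prop :=
  ∀ A' ⊆ A, ∀ B' ⊆ B,
    ε * (A.card : ℝ) ≤ (A'.card : ℝ) → ε * (B.card : ℝ) ≤ (B'.card : ℝ) →
      |dens G A' B' - dens G A B| ≤ ε

/-- `(ε,δ)`-regular pair: `ε`-regular with density at least `δ`. -/
def RegularPair {V : Type*} (G : SimpleGraph V) (ε δ : ℝ) (A B : Finset V) : Prop :=
  EpsRegularPair G ε A B ∧ δ ≤ dens G A B

/-- `(ε,δ)`-super-regular pair: `ε`-regular and every vertex of `A` has at least `δ|B|`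
neighbours in `B` and vice versa. -/
def SuperRegularPair {V : Type*} (G : SimpleGraph V) (ε δ : ℝ) (A B : Finset V) : Prop :=
  EpsRegularPair G ε A B ∧
    (∀ v ∈ A, δ * (B.card : ℝ) ≤ (Set.ncard {u : V | u ∈ B ∧ G.Adj v u} : ℝ)) ∧
    (∀ v ∈ B, δ * (A.card : ℝ) ≤ (Set.ncard {u : V | u ∈ A ∧ G.Adj v u} : ℝ))

/-- A family of vertex sets is `(ε,δ)`-regular on a reduced graph `R`. -/
def RegularOn {V ι : Type*} (G : SimpleGraph V) (ε δ : ℝ) (R : SimpleGraph ι)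
    (P : ι → Finset V) : Prop :=
  ∀ i j, R.Adj i j → RegularPair G ε δ (P i) (P j)

/-- A family of vertex sets is `(ε,δ)`-super-regular on a reduced graph `R`. -/
def SuperRegularOn {V ι : Type*} (G : SimpleGraph V) (ε δ : ℝ) (R : SimpleGraph ι)
    (P : ι → Finset V) : Prop :=
  ∀ i j, R.Adj i j → SuperRegularPair G ε δ (P i) (P j)

/-- `P` is a partition of the whole vertex set. -/
def IsPartitionOn {V ι : Type*} (P : ι → Finset V) : Prop :=
  (∀ i j, i ≠ j → Disjoint (P i) (P j)) ∧ ∀ v : V, ∃ i, v ∈ P i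

/-- `G` contains a copy of `H`: there is an injective graph homomorphism `H → G`. -/
def ContainsCopy {V W : Type*} (G : SimpleGraph V) (H : SimpleGraph W) : Prop :=
  ∃ f : W → V, Function.Injective f ∧ ∀ u v, H.Adj u v → G.Adj (f u) (f v)

/-- `H` has bandwidth at most `b`: there is a labelling of the vertices by `1,…,n`
(equivalently by `Fin n`) such that the labels of adjacent vertices differ by at most `b`. -/
def BandwidthLE {V : Type*} [Fintype V] (H : SimpleGraph V) (b : ℝ) : Prop :=
  ∃ φ : V ≃ Fin (Fintype.card V),
    ∀ u v, H.Adj u v → |((φ u : ℕ) : ℝ) - ((φ v : ℕ) : ℝ)| ≤ b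

/-- `H` is `a`-arrangeable: there is an ordering `φ` of the vertices such that for every
vertex `x`, the left-neighbourhood of the right-neighbourhood of `x` has size at most `a`. -/
def Arrangeable {V : Type*} [Fintype V] (H : SimpleGraph V) (a : ℕ) : Prop :=
  ∃ φ : V ≃ Fin (Fintype.card V), ∀ x : V,
    Set.ncard {u : V | φ u ≤ φ x ∧ ∃ w : V, H.Adj x w ∧ φ x < φ w ∧ H.Adj w u} ≤ a

/-- Maximum degree at most `D`. -/
def MaxDegreeLE {V : Type*} (H : SimpleGraph V) (D : ℝ) : Prop :=
  ∀ v : V, ((H.neighborSet v).ncard : ℝ) ≤ D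

/-- Minimum degree at least `D`. -/
def MinDegreeGE {V : Type*} (G : SimpleGraph V) (D : ℝ) : Prop :=
  ∀ v : V, D ≤ ((G.neighborSet v).ncard : ℝ)

/-- `K_k^r`: the disjoint union of `k` complete graphs on `r` vertices,
on vertex set `[k] × [r]`. -/
def graphK (k r : ℕ) : SimpleGraph (Fin k × Fin r) :=
  SimpleGraph.fromRel fun p q => p.1 = q.1 ∧ p.2 ≠ q.2

/-- `B_k^r`: `(i,j)` and `(i',j')` are adjacent iff `|i − i'| ≤ 1` and `j ≠ j'`. -/
def graphB (k r : ℕ) : SimpleGraph (Fin k × Fin r) :=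
  SimpleGraph.fromRel fun p q => ((p.1 : ℤ) - (q.1 : ℤ)).natAbs ≤ 1 ∧ p.2 ≠ q.2

/-- `C_m^r`: the `r`-th power of the cycle on `m` vertices. -/
def cyclePower (m r : ℕ) : SimpleGraph (Fin m) :=
  SimpleGraph.fromRel fun u v =>
    min (((u : ℤ) - (v : ℤ)).natAbs) (m - ((u : ℤ) - (v : ℤ)).natAbs) ≤ r

/-- `(m i j)` is an `r`-equitable integer partition of `n`. -/
def EquitablePartition (n k r : ℕ) (m : Fin k → Fin r → ℕ) : Prop :=
  (∑ i, ∑ j, m i j) = n ∧ ∀ i j j', m i j ≤ m i j' + 1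

/-- The two-colour Ramsey number of `H` is at most `N`: every red/blue colouring of the
edges of `K_N` (coded by the graph of red edges) contains a monochromatic copy of `H`. -/
def RamseyPropLE {W : Type*} (H : SimpleGraph W) (N : ℕ) : Prop :=
  ∀ Gr : SimpleGraph (Fin N), ContainsCopy Gr H ∨ ContainsCopy Grᶜ H

/-- The vertex labelled `v` (with 1-based label `v+1`) lies in the block
`B_t = {(t−1)4rβn + 1, …, t·4rβn}`. -/
def InBlock (r : ℕ) (β : ℝ) (n : ℕ) (t : ℕ) (v : Fin n) : Prop :=
  ((t : ℝ) - 1) * (4 * r * β * n) < ((v : ℕ) : ℝ) + 1 ∧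
    ((v : ℕ) : ℝ) + 1 ≤ (t : ℝ) * (4 * r * β * n)

/-- The block `B_t` contains a vertex of colour `0`. -/
def BlockHasZero (r : ℕ) (β : ℝ) (n : ℕ) (σ : Fin n → ℕ) (t : ℕ) : Prop :=
  ∃ v : Fin n, InBlock r β n t v ∧ σ v = 0

/-- `σ` is `(ℓ,β)`-zero free: among any `ℓ` consecutive blocks at most one block
contains a vertex of colour `0`. -/
def ZeroFree (ℓ : ℝ) (r : ℕ) (β : ℝ) (n : ℕ) (σ : Fin n → ℕ) : Prop :=
  ∀ t₀ t t' : ℕ, t₀ ≤ t → t₀ ≤ t' → (t : ℝ) < (t₀ : ℝ) + ℓ → (t' : ℝ) < (t₀ : ℝ) + ℓ →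
    BlockHasZero r β n σ t → BlockHasZero r β n σ t' → t = t'

/-- A proper `(r+1)`-colouring with colours `{0,…,r}`. -/
def ProperColoring {n : ℕ} (H : SimpleGraph (Fin n)) (r : ℕ) (σ : Fin n → ℕ) : Prop :=
  (∀ v, σ v ≤ r) ∧ ∀ u v, H.Adj u v → σ u ≠ σ v

/-- `σ : [n] → {0,…,r}` is `x`-balanced. -/
def BalancedColoring (r n : ℕ) (x : ℝ) (σ : Fin n → ℕ) : Prop :=
  (∀ a b : ℕ, a ≤ b → b ≤ n → ∀ c : ℕ, 1 ≤ c → c ≤ r →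
    ((b : ℝ) - (a : ℝ)) / r - x ≤
        (Set.ncard {v : Fin n | σ v = c ∧ a ≤ (v : ℕ) ∧ (v : ℕ) < b} : ℝ) ∧
      (Set.ncard {v : Fin n | σ v = c ∧ a ≤ (v : ℕ) ∧ (v : ℕ) < b} : ℝ) ≤
        ((b : ℝ) - (a : ℝ)) / r + x) ∧
  (Set.ncard {v : Fin n | σ v = 0} : ℝ) ≤ x

/-- The red part of the coloured reduced graph: `ij` is an edge iff `(Vᵢ,Vⱼ)` is a coloured
`ε`-regular pair whose majority colour is red (red density at least `1/2`). -/
def reducedRed {n k : ℕ} (Gred : SimpleGraph (Fin n)) (ε : ℝ) (P : Fin k → Finset (Fin n)) :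
    SimpleGraph (Fin k) :=
  SimpleGraph.fromRel fun i j =>
    EpsRegularPair Gred ε (P i) (P j) ∧ (1 / 2 : ℝ) ≤ dens Gred (P i) (P j)

/-- The blue part of the coloured reduced graph. -/
def reducedBlue {n k : ℕ} (Gred : SimpleGraph (Fin n)) (ε : ℝ) (P : Fin k → Finset (Fin n)) :
    SimpleGraph (Fin k) :=
  SimpleGraph.fromRel fun i j =>
    EpsRegularPair Gred ε (P i) (P j) ∧ dens Gred (P i) (P j) < (1 / 2 : ℝ)

/-- the colour switching proposition. The vertex set of `H` is `Fin n`,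
vertex `v` carries the 1-based label `v + 1`. -/
theorem switching (n r : ℕ) (β : ℝ) (H : SimpleGraph (Fin n))
    (hbw : ∀ u v : Fin n, H.Adj u v → |((u : ℕ) : ℝ) - ((v : ℕ) : ℝ)| ≤ β * n)
    (s : ℕ) (hs1 : 1 ≤ s) (hsn : s ≤ n)
    (σ : Fin n → ℕ) (hσ : ProperColoring H r σ)
    (hzero : ∀ v : Fin n, (s : ℝ) - 2 * β * n ≤ ((v : ℕ) : ℝ) + 1 →
      ((v : ℕ) : ℝ) + 1 ≤ (s : ℝ) + 2 * β * n → σ v ≠ 0)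
    (l l' : ℕ) (hl : 1 ≤ l) (hlr : l ≤ r) (hl' : 1 ≤ l') (hl'r : l' ≤ r) (hne : l ≠ l')
    (σ' : Fin n → ℕ)
    (hσ' : ∀ v : Fin n,
      σ' v = if σ v = l' ∧ (s : ℝ) < ((v : ℕ) : ℝ) + 1 then l
        else if σ v = l ∧ (s : ℝ) + β * n < ((v : ℕ) : ℝ) + 1 then l'
        else if σ v = l ∧ (s : ℝ) - β * n ≤ ((v : ℕ) : ℝ) + 1 ∧
            ((v : ℕ) : ℝ) + 1 ≤ (s : ℝ) + β * n then 0
        else σ v) :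
    ProperColoring H r σ' := by
  obtain ⟨hle, hprop⟩ := hσ
  constructor
  · intro v
    rw [hσ' v]
    split_ifs <;> first | exact hlr | exact hl'r | exact Nat.zero_le r | exact hle v
  · intro u v huv
    have hband := hbw u v huv
    have hne' := hprop u v huv
    have hβ : (0:ℝ) ≤ β * n := le_trans (abs_nonneg _) hband
    rw [abs_le] at hband
    have hzu := hzero u
    have hzv := hzero v
    rw [hσ' u, hσ' v]
    split_ifs with h1 h2 h3 h4 h5 h6 h7 h8 h9 h10 h11 h12 h13 h14 h15
    · exact absurd (h1.1.trans h2.1.symm) hne'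
    · exact hne
    · omega
    · push_neg at h3 h4
      intro h
      have hv := h.symm
      have hb := h3 hv
      have hc := h4 hv
      have hlt : ((v:ℕ):ℝ) + 1 < (s:ℝ) - β*n := by
        by_contra hcc; push_neg at hcc; linarith [hc hcc]
      linarith [h1.2, hband.1, hband.2]
    · exact Ne.symm hne
    · exact absurd (h5.1.trans h7.1.symm) hne'
    · omega
    · push_neg at h6
      intro h
      have := h6 h.symm
      linarith [h5.2, hband.2]
    · omega
    · omega
    · exact absurd (h9.1.trans h12.1.symm) hne'
    · intro h
      exact hzv (by linarith [h9.2.1, hband.2]) (by linarith [h9.2.2, hband.1]) h.symm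
    · push_neg at h5 h9
      intro h
      have hb := h5 h
      have hc := h9 h
      have hlt : ((u:ℕ):ℝ) + 1 < (s:ℝ) - β*n := by
        by_contra hcc; push_neg at hcc; linarith [hc hcc]
      linarith [h13.2, hband.1, hband.2]
    · push_neg at h1
      intro h
      have := h1 h
      linarith [h14.2, hband.1]
    · intro h
      exact hzu (by linarith [h15.2.1, hband.1]) (by linarith [h15.2.2, hband.2]) h
    · exact hne'

end Paper
end

section
/- Let H be a graph on vertex set [n] whose identity labelling has bandwidth at most βn, let σ: [n] → {0,…,r} be a proper (r+1)-colouring of H, let B_t be a block containing no vertex of colour 0, and let π be any permutation of [r]. Then there exists a proper (r+1)-colouring σ′ of H with σ′(v) = σ(v) for all v ∈ ⋃_{i<t} B_i and σ′(v) = π(σ(v)) for all v ∈ ⋃_{i>t} B_i. -/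
/-
Write `π` (restricted to `{0,…,r}`) as a product of at most `2r` transpositions `(0 c)`, and
split block `t` into consecutive windows of length `βn`, one per transposition. Colour a vertex
by applying to its old colour the product of the transpositions of the windows lying entirely to
its left. An edge, having length at most `βn`, sees at most one more transposition at one end than
at the other, and then both its ends lie in block `t` and carry nonzero colours; a transposition
`(0 c)` cannot make two distinct nonzero colours equal.
-/

open Finset

namespace Equiv.Perm

variable {α : Type*} [DecidableEq α]

def swapProd (a : α) (l : List α) : Perm α :=
  (l.map (swap a)).prod

@[simp]
lemma swapProd_nil (a : α) : swapProd a [] = 1 := rfl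

@[simp]
lemma swapProd_cons (a x : α) (l : List α) :
    swapProd a (x :: l) = swap a x * swapProd a l := by
  simp [swapProd]

@[simp]
lemma swapProd_append (a : α) (l₁ l₂ : List α) :
    swapProd a (l₁ ++ l₂) = swapProd a l₁ * swapProd a l₂ := by
  simp [swapProd]

lemma swapProd_take_succ (a : α) (l : List α) (k : ℕ) :
    swapProd a (l.take (k + 1)) = swapProd a (l.take k) * swapProd a l[k]?.toList := by
  rw [List.take_add_one, swapProd_append]

lemma swap_apply_ne_of_ne {a x y : α} (c : α) (hx : x ≠ a) (hy : y ≠ a) (hxy : x ≠ y) :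
    x ≠ swap a c y := by
  rw [swap_apply_def]
  split_ifs with hya hyc
  exacts [absurd hya hy, hx, hxy]

variable [Fintype α]

lemma eq_one_of_support_erase_eq_empty {a : α} {g : Perm α} (h : g.support.erase a = ∅) :
    g = 1 := by
  rw [← card_support_le_one]
  have := pred_card_le_card_erase (s := g.support) (a := a)
  rw [h, card_empty] at this
  omega

lemma support_erase_swap_mul_swap_mul_subset (a : α) {g : Perm α} {b : α} (hb : b ≠ a) :
    (swap a b * swap a (g b) * g).support.erase a ⊆ (g.support.erase a).erase b := by
  intro x hx
  simp only [mem_erase, mem_support, ne_eq] at hx ⊢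
  obtain ⟨hxa, hx⟩ := hx
  have hxb : x ≠ b := by
    rintro rfl
    simp at hx
  refine ⟨hxb, hxa, fun hgx => hx ?_⟩
  have hxgb : x ≠ g b := by
    rintro rfl
    exact hxb (g.injective hgx)
  simp [hgx, swap_apply_of_ne_of_ne hxa hxgb, swap_apply_of_ne_of_ne hxa hxb]

lemma exists_swapProd_eq_of_card_le (a : α) {k : ℕ} {g : Perm α}
    (hg : #(g.support.erase a) ≤ k) : ∃ l : List α, swapProd a l = g ∧ l.length ≤ 2 * k := by
  induction k generalizing g with
  | zero =>
    exact ⟨[], (eq_one_of_support_erase_eq_empty (card_eq_zero.mp (Nat.le_zero.mp hg))).symm,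
      le_rfl⟩
  | succ k ih =>
    obtain h | ⟨b, hb⟩ := (g.support.erase a).eq_empty_or_nonempty
    · exact ⟨[], (eq_one_of_support_erase_eq_empty h).symm, Nat.zero_le _⟩
    have hba : b ≠ a := (mem_erase.mp hb).1
    obtain ⟨l, hl, hlen⟩ := ih (g := swap a b * swap a (g b) * g) <| by
      have := card_le_card (support_erase_swap_mul_swap_mul_subset a (g := g) hba)
      rw [card_erase_of_mem hb] at this
      omega
    refine ⟨g b :: b :: l, ?_, by simp only [List.length_cons]; omega⟩
    simp [hl, ← mul_assoc]

lemma exists_swapProd_eq (a : α) (g : Perm α) :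
    ∃ l : List α, swapProd a l = g ∧ l.length ≤ 2 * (Fintype.card α - 1) := by
  refine exists_swapProd_eq_of_card_le a ?_
  rw [← card_univ, ← card_erase_of_mem (mem_univ a)]
  exact card_le_card (erase_subset_erase a (subset_univ _))

end Equiv.Perm

open Equiv Perm

section Recolouring

variable {V α : Type*} [DecidableEq α]

theorem swapProd_take_apply_ne_of_adj {G : SimpleGraph V} {c : V → α}
    (hc : ∀ u v, G.Adj u v → c u ≠ c v) {a : α} {l : List α} {f : V → ℕ}
    (hstep : ∀ u v, G.Adj u v → f v ≤ f u + 1)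
    (hcross : ∀ u v, G.Adj u v → f u < f v → f u < l.length → c u ≠ a ∧ c v ≠ a)
    {u v : V} (huv : G.Adj u v) :
    swapProd a (l.take (f u)) (c u) ≠ swapProd a (l.take (f v)) (c v) := by
  wlog h : f u ≤ f v generalizing u v
  · exact (this huv.symm (le_of_not_ge h)).symm
  obtain heq | hlt := h.eq_or_lt
  · rw [heq]
    exact (swapProd a _).injective.ne (hc u v huv)
  rw [le_antisymm (hstep u v huv) hlt, swapProd_take_succ, mul_apply]
  refine (swapProd a _).injective.ne ?_
  cases hx : l[f u]? with
  | none => simpa using hc u v huv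
  | some x =>
    obtain ⟨hu, hv⟩ := hcross u v huv hlt (List.getElem?_eq_some_iff.mp hx).1
    simpa using swap_apply_ne_of_ne x hu hv (hc u v huv)

/-- The number of thresholds `L + w, L + 2w, …` lying strictly below `x`. -/
noncomputable def stage (L w x : ℝ) : ℕ :=
  ⌈(x - L) / w⌉₊ - 1

lemma stage_le_iff {L w x : ℝ} (hw : 0 < w) {k : ℕ} :
    stage L w x ≤ k ↔ x ≤ L + (k + 1) * w := by
  rw [stage, Nat.sub_le_iff_le_add, Nat.ceil_le, div_le_iff₀ hw]
  push_cast
  constructor <;> intro h <;> linarith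

theorem exists_recolouring_across_window [Fintype α] (G : SimpleGraph V) (pos : V → ℝ)
    {w : ℝ} (hw : 0 < w) (hG : ∀ u v, G.Adj u v → pos v ≤ pos u + w)
    (c : V → α) (hc : ∀ u v, G.Adj u v → c u ≠ c v) (a : α) (g : Perm α) (L : ℝ)
    {m : ℕ} (hm : 2 * (Fintype.card α - 1) < m)
    (hwin : ∀ v, L < pos v → pos v ≤ L + m * w → c v ≠ a) :
    ∃ c' : V → α, (∀ u v, G.Adj u v → c' u ≠ c' v) ∧
      (∀ v, pos v ≤ L + w → c' v = c v) ∧ (∀ v, L + m * w < pos v → c' v = g (c v)) := by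
  obtain ⟨l, hl, hlen⟩ := exists_swapProd_eq a g
  have hle_stage (v : V) : pos v ≤ L + (stage L w (pos v) + 1) * w :=
    (stage_le_iff hw).mp le_rfl
  refine ⟨fun v => swapProd a (l.take (stage L w (pos v))) (c v), fun u v huv =>
    swapProd_take_apply_ne_of_adj (f := fun v => stage L w (pos v)) hc ?_ ?_ huv,
    fun v hv => ?_, fun v hv => ?_⟩
  · intro u v huv
    rw [stage_le_iff hw]
    push_cast
    linarith [hG u v huv, hle_stage u]
  · intro u v huv hlt hu
    beta_reduce at hlt hu
    have hv : L + w < pos v := by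
      by_contra! h
      have := (stage_le_iff hw (k := 0)).mpr (by simpa using h)
      omega
    have hm' : (stage L w (pos u) : ℝ) + 2 ≤ m := by
      exact_mod_cast (by omega : stage L w (pos u) + 2 ≤ m)
    have huv_pos := hG u v huv
    have hu_le := hle_stage u
    exact ⟨hwin u (by linarith) (by nlinarith), hwin v (by linarith) (by nlinarith)⟩
  · have : stage L w (pos v) = 0 := Nat.le_zero.mp ((stage_le_iff hw).mpr (by simpa using hv))
    simp [this]
  · have : l.length ≤ stage L w (pos v) := by
      by_contra! h
      have hm' : (stage L w (pos v) : ℝ) + 1 ≤ m := by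
        exact_mod_cast (by omega : stage L w (pos v) + 1 ≤ m)
      nlinarith [hle_stage v]
    simp [List.take_of_length_le this, hl]

end Recolouring

namespace Paper

section Blocks

variable {r : ℕ} {β : ℝ} {n i : ℕ} {v : Fin n}

lemma InBlock.width_pos (hv : InBlock r β n i v) : 0 < 4 * r * β * n := by
  by_contra! hW
  have := mul_nonpos_of_nonneg_of_nonpos (Nat.cast_nonneg i) hW
  linarith [hv.2, (Nat.cast_nonneg v : (0 : ℝ) ≤ v)]

lemma InBlock.add_one_le_of_lt {t : ℕ} (hv : InBlock r β n i v) (hi : i < t) :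
    (v : ℝ) + 1 ≤ (t - 1) * (4 * r * β * n) := by
  have hit : (i : ℝ) ≤ t - 1 := by
    have : (i : ℝ) + 1 ≤ t := by exact_mod_cast hi
    linarith
  linarith [hv.2, mul_le_mul_of_nonneg_right hit hv.width_pos.le]

lemma InBlock.lt_add_one_of_gt {t : ℕ} (hv : InBlock r β n i v) (hi : t < i) :
    t * (4 * r * β * n) < (v : ℝ) + 1 := by
  have hti : (t : ℝ) ≤ i - 1 := by
    have : (t : ℝ) + 1 ≤ i := by exact_mod_cast hi
    linarith
  linarith [hv.1, mul_le_mul_of_nonneg_right hti hv.width_pos.le]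

end Blocks

/-- The vertex set of `H` is `Fin n`, vertex `v` carrying the 1-based label `v + 1`;
`π` is a permutation of `ℕ` fixing `0` and preserving `{1,…,r}`. -/
theorem recolour (n r : ℕ) (β : ℝ) (H : SimpleGraph (Fin n))
    (hbw : ∀ u v : Fin n, H.Adj u v → |((u : ℕ) : ℝ) - ((v : ℕ) : ℝ)| ≤ β * n)
    (σ : Fin n → ℕ) (hσ : ProperColoring H r σ)
    (t : ℕ) (hzf : ¬ BlockHasZero r β n σ t)
    (π : Equiv.Perm ℕ) (hπ0 : π 0 = 0) (hπ : ∀ c : ℕ, 1 ≤ c → c ≤ r → 1 ≤ π c ∧ π c ≤ r) :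
    ∃ σ' : Fin n → ℕ, ProperColoring H r σ' ∧
      (∀ v : Fin n, ∀ i : ℕ, i < t → InBlock r β n i v → σ' v = σ v) ∧
      (∀ v : Fin n, ∀ i : ℕ, t < i → InBlock r β n i v → σ' v = π (σ v)) := by
  by_cases hW : 0 < 4 * r * β * n
  swap
  · exact ⟨σ, hσ, fun _ _ _ _ => rfl, fun _ _ _ hv => absurd hv.width_pos hW⟩
  have hr : 1 ≤ r := Nat.one_le_iff_ne_zero.mpr (by rintro rfl; simp at hW)
  have hw : 0 < β * n := by nlinarith [(Nat.cast_pos.mpr hr : (0 : ℝ) < r)]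
  have hπr (c : ℕ) (hc : c ≤ r) : π c ≤ r := by
    obtain rfl | hc0 := Nat.eq_zero_or_pos c
    exacts [by simp [hπ0], (hπ c hc0 hc).2]
  have hcard : Fintype.card (Set.Iic r) = r + 1 := by simp
  -- colours live in `Set.Iic r`; the window `(L, L + 4r·βn]` with `L = (t-1)·4rβn` is block `t`
  obtain ⟨c', hc', hbefore, hafter⟩ := exists_recolouring_across_window (α := Set.Iic r) H
    (fun v => (v : ℝ) + 1) hw (fun u v huv => by linarith [(abs_sub_le_iff.mp (hbw u v huv)).2])
    (fun v => ⟨σ v, hσ.1 v⟩) (fun u v huv h => hσ.2 u v huv (congrArg Subtype.val h))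
    ⟨0, Nat.zero_le r⟩ (π.subtypePermOfFintype hπr) ((t - 1) * (4 * r * β * n))
    (m := 4 * r) (by omega)
    (fun v h₁ h₂ h => hzf ⟨v, ⟨h₁, by push_cast at h₂; linarith⟩, congrArg Subtype.val h⟩)
  refine ⟨fun v => c' v, ⟨fun v => (c' v).2, fun u v huv => Subtype.val_injective.ne (hc' u v huv)⟩,
    fun v i hi hv => congrArg Subtype.val (hbefore v ?_),
    fun v i hi hv => congrArg Subtype.val (hafter v ?_)⟩
  · linarith [hv.add_one_le_of_lt hi]
  · push_cast
    linarith [hv.lt_add_one_of_gt hi]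

end Paper
end

section
/- Every finite graph with maximum degree at most Δ is (Δ² − Δ + 1)-arrangeable. -/
open Finset

namespace Paper

/-- graphs of maximum degree at most `Δ` are `(Δ² − Δ + 1)`-arrangeable. -/
theorem arrangeable_of_maxDegreeLE {V : Type*} [Fintype V] (Δ : ℕ) (H : SimpleGraph V)
    (h : MaxDegreeLE H (Δ : ℝ)) : Arrangeable H (Δ ^ 2 - Δ + 1) := by
  classical
  have hdeg : ∀ v : V, (H.neighborFinset v).card ≤ Δ := by
    intro v
    have h2 := h v
    rw [show (H.neighborSet v).ncard = (H.neighborFinset v).card by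
      simp [Set.ncard_eq_toFinset_card', SimpleGraph.neighborFinset_def]] at h2
    exact_mod_cast h2
  refine ⟨Fintype.equivFin V, fun x => ?_⟩
  set φ := Fintype.equivFin V
  set T : Finset V :=
    insert x ((H.neighborFinset x).biUnion fun w => (H.neighborFinset w).erase x) with hT
  have hsub : {u : V | φ u ≤ φ x ∧ ∃ w : V, H.Adj x w ∧ φ x < φ w ∧ H.Adj w u} ⊆ (T : Set V) := by
    rintro u ⟨-, w, hxw, -, hwu⟩
    by_cases hux : u = x
    · simp [hT, hux]
    · simp only [hT, Finset.coe_insert, Set.mem_insert_iff, Finset.coe_biUnion,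
        Set.mem_iUnion, Finset.mem_coe, Finset.mem_erase, SimpleGraph.mem_neighborFinset]
      exact Or.inr ⟨w, hxw, hux, hwu⟩
  have hcard : T.card ≤ Δ * (Δ - 1) + 1 := by
    have h1 : ((H.neighborFinset x).biUnion fun w => (H.neighborFinset w).erase x).card ≤
        Δ * (Δ - 1) := by
      refine le_trans (Finset.card_biUnion_le) ?_
      refine le_trans (Finset.sum_le_card_nsmul _ _ (Δ - 1) ?_) ?_
      · intro w hw
        rw [SimpleGraph.mem_neighborFinset] at hw
        have hx : x ∈ H.neighborFinset w := by
          rw [SimpleGraph.mem_neighborFinset]; exact hw.symm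
        rw [Finset.card_erase_of_mem hx]
        exact Nat.sub_le_sub_right (hdeg w) 1
      · simpa [smul_eq_mul] using Nat.mul_le_mul_right (Δ - 1) (hdeg x)
    calc T.card ≤ _ + 1 := Finset.card_insert_le _ _
      _ ≤ Δ * (Δ - 1) + 1 := by omega
  have hle : Set.ncard {u : V | φ u ≤ φ x ∧ ∃ w : V, H.Adj x w ∧ φ x < φ w ∧ H.Adj w u} ≤
      T.card := by
    have := Set.ncard_le_ncard hsub (T : Set V).toFinite
    simpa [Set.ncard_coe_finset] using this
  have key : Δ * (Δ - 1) + 1 = Δ ^ 2 - Δ + 1 := by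
    cases Δ with
    | zero => simp
    | succ n => simp [pow_two, Nat.succ_sub_one, Nat.mul_succ, Nat.succ_mul]
  omega

end Paper
end

section
/- Let r, k be positive integers and γ > 0, and let R̃ be a graph on vertex set [k]×[r] with B_k^r ⊆ R̃ and minimum degree δ(R̃) ≥ ((r−1)/r + γ/2)kr. Then: (i) for every i ∈ [k] there are at least (γ/2)kr vertices v ∈ ([k]∖{i}) × [r] such that {v,(i,j)} is an edge of R̃ for all j ∈ [r]; and (ii) there exists a subgraph R of R̃ with B_k^r ⊆ R, maximum degree Δ(R) ≤ 3r + 2/γ, and such that for every i ∈ [k] there is a vertex sᵢ ∈ ([k]∖{i}) × [r] with {sᵢ,(i,j)} an edge of R for every j ∈ [r]. -/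
/-!
Fix a column `i`. A vertex `(i, j)` has at most `r - 1` neighbours inside its own column, so the
degree bound leaves it at most `k - 1 - γkr/2` non-neighbours outside the column; a union bound
over `j` then leaves at least `γkr²/2` vertices outside column `i` that are adjacent to all of it,
which is (i). For (ii) put `t = ⌈2/(γr²)⌉`: every column has at least `k/t` such vertices, so by
Hall's theorem each column `i` gets a hub `sᵢ` among them with no vertex serving as hub for more
than `t` columns. Adding to `B_k^r` the edges from each hub to its column gives degrees at most
`3(r - 1) + 1 + tr ≤ 3r + 2/γ`, the last step because `γr < 2` (all degrees are below `kr`).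
-/

open Finset

namespace Paper

-- Hall's theorem applied to the sets `G i ×ˢ range t` gives an injective choice of pairs
-- `(s i, c i)`; the second coordinate separates the indices sharing a value of `s`.
theorem exists_mem_card_fiber_le {ι V : Type*} [Fintype ι] [DecidableEq V]
    (G : ι → Finset V) (t : ℕ) (hG : ∀ i, Fintype.card ι ≤ t * #(G i)) :
    ∃ s : ι → V, (∀ i, s i ∈ G i) ∧ ∀ v, #{i | s i = v} ≤ t := by
  classical
  have hall : ∀ A : Finset ι, #A ≤ #(A.biUnion fun i => G i ×ˢ range t) := by
    intro A
    obtain rfl | ⟨i, hi⟩ := A.eq_empty_or_nonempty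
    · simp
    calc #A ≤ Fintype.card ι := card_le_univ A
      _ ≤ #(G i ×ˢ range t) := by rw [card_product, card_range, mul_comm]; exact hG i
      _ ≤ _ := card_le_card (subset_biUnion_of_mem (fun i => G i ×ˢ range t) hi)
  obtain ⟨f, hf, hfG⟩ := (all_card_le_biUnion_card_iff_exists_injective _).1 hall
  refine ⟨fun i => (f i).1, fun i => (mem_product.1 (hfG i)).1, fun v => ?_⟩
  calc #{i | (f i).1 = v} ≤ #(range t) := by
        refine card_le_card_of_injOn (fun i => (f i).2)
          (fun i _ => (mem_product.1 (hfG i)).2) fun i hi j hj hij => hf ?_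
        simp only [coe_filter, mem_univ, true_and, Set.mem_ofPred_eq] at hi hj
        exact Prod.ext (hi.trans hj.symm) hij
    _ = t := card_range t

section Counting

variable {V ι : Type*} [Fintype V] [DecidableEq V] [Fintype ι]
  (G : SimpleGraph V) [DecidableRel G.Adj]

theorem card_filter_not_adj_add_degree_le (O : Finset V) {w : V} (hw : w ∉ O) :
    #{v ∈ O | ¬ G.Adj v w} + (G.degree w + 1) ≤ Fintype.card V := by
  have hsub : {v ∈ O | ¬ G.Adj v w} ⊆ (insert w (G.neighborFinset w))ᶜ := by
    intro v hv
    obtain ⟨hvO, hvw⟩ := mem_filter.1 hv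
    simp only [mem_compl, mem_insert, SimpleGraph.mem_neighborFinset, not_or]
    exact ⟨fun h => hw (h ▸ hvO), fun h => hvw h.symm⟩
  have hcard := card_le_card hsub
  rw [card_compl, card_insert_of_notMem (G.notMem_neighborFinset_self w),
    G.card_neighborFinset_eq_degree] at hcard
  have := card_le_univ (insert w (G.neighborFinset w))
  rw [card_insert_of_notMem (G.notMem_neighborFinset_self w),
    G.card_neighborFinset_eq_degree] at this
  omega

-- Union bound: a vertex of `O` that misses some `w j` is a non-neighbour of that `w j`.
theorem card_add_sum_degree_le (O : Finset V) (w : ι → V) (hw : ∀ j, w j ∉ O) :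
    #O + ∑ j, (G.degree (w j) + 1) ≤
      #{v ∈ O | ∀ j, G.Adj v (w j)} + Fintype.card ι * Fintype.card V := by
  have hcover : O ⊆ {v ∈ O | ∀ j, G.Adj v (w j)} ∪
      univ.biUnion fun j => {v ∈ O | ¬ G.Adj v (w j)} := by
    intro v hv
    by_cases hall : ∀ j, G.Adj v (w j)
    · exact mem_union_left _ (mem_filter.2 ⟨hv, hall⟩)
    · obtain ⟨j, hj⟩ := not_forall.1 hall
      exact mem_union_right _ (mem_biUnion.2 ⟨j, mem_univ j, mem_filter.2 ⟨hv, hj⟩⟩)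
  have hunion := (card_le_card hcover).trans ((card_union_le _ _).trans
    (Nat.add_le_add_left card_biUnion_le _))
  have hsum : ∑ j, (#{v ∈ O | ¬ G.Adj v (w j)} + (G.degree (w j) + 1)) ≤
      Fintype.card ι * Fintype.card V := by
    simpa using sum_le_sum fun j (_ : j ∈ univ) =>
      card_filter_not_adj_add_degree_le G O (hw j)
  rw [sum_add_distrib] at hsum
  omega

end Counting

section Hub

variable {κ ρ : Type*} (s : κ → κ × ρ)

-- Every vertex `(i, j)` of column `i` is joined to the hub `s i`.
def hubGraph : SimpleGraph (κ × ρ) :=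
  SimpleGraph.fromRel fun p q => p = s q.1

theorem hubGraph_adj {i : κ} (hi : (s i).1 ≠ i) (j : ρ) : (hubGraph s).Adj (s i) (i, j) :=
  ⟨fun h => hi (congrArg Prod.fst h), Or.inl rfl⟩

theorem hubGraph_le {G : SimpleGraph (κ × ρ)} (h : ∀ i j, G.Adj (s i) (i, j)) :
    hubGraph s ≤ G := by
  rintro p q ⟨-, rfl | rfl⟩
  · exact h q.1 q.2
  · exact (h p.1 p.2).symm

theorem ncard_neighborSet_hubGraph_le [Fintype κ] [Fintype ρ] [DecidableEq κ] [DecidableEq ρ]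
    (v : κ × ρ) :
    ((hubGraph s).neighborSet v).ncard ≤ 1 + #{i | s i = v} * Fintype.card ρ := by
  have hsub : (hubGraph s).neighborSet v ⊆
      ↑(insert (s v.1) (({i | s i = v} : Finset κ) ×ˢ (univ : Finset ρ))) := by
    rintro u ⟨-, h | h⟩ <;> simp [h]
  calc _ ≤ #(insert (s v.1) (({i | s i = v} : Finset κ) ×ˢ (univ : Finset ρ))) := by
        rw [← Set.ncard_coe_finset]; exact Set.ncard_le_ncard hsub
    _ ≤ _ := by
        rw [add_comm, ← card_univ, ← card_product]
        exact card_insert_le _ _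

end Hub

theorem natCeil_two_div_mul_le {γ r : ℝ} (hγ : 0 < γ) (hr : 1 ≤ r) (hγr : γ * r ≤ 2) :
    ⌈2 / (γ * r ^ 2)⌉₊ * r ≤ 2 / γ + 2 := by
  have hr0 : 0 < r := by linarith
  calc ⌈2 / (γ * r ^ 2)⌉₊ * r ≤ (2 / (γ * r ^ 2) + 1) * r := by
        gcongr; exact (Nat.ceil_lt_add_one (by positivity)).le
    _ = 2 / γ + 2 - ((r - 1) * (2 - γ * r) / (γ * r) + 1) := by
        field_simp; ring
    _ ≤ 2 / γ + 2 := by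
        have : 0 ≤ (r - 1) * (2 - γ * r) / (γ * r) := by
          apply div_nonneg (mul_nonneg _ _) (by positivity) <;> linarith
        linarith

theorem _root_.SimpleGraph.ncard_neighborSet_eq_degree {V : Type*} (G : SimpleGraph V) (v : V)
    [Fintype (G.neighborSet v)] : (G.neighborSet v).ncard = G.degree v := by
  rw [Set.ncard_eq_toFinset_card', ← G.neighborFinset_def, G.card_neighborFinset_eq_degree]

section Grid

variable {k r : ℕ}

theorem minDegree_threshold_eq {γ : ℝ} (hr : (r : ℝ) ≠ 0) :
    (((r : ℝ) - 1) / r + γ / 2) * (k * r) = (r - 1) * k + γ / 2 * (k * r) := by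
  field_simp

def coveringVertices (G : SimpleGraph (Fin k × Fin r)) (i : Fin k) : Set (Fin k × Fin r) :=
  {v | v.1 ≠ i ∧ ∀ j, G.Adj v (i, j)}

theorem card_filter_fst_ne (i : Fin k) :
    #{v : Fin k × Fin r | v.1 ≠ i} = (k - 1) * r := by
  have : ({v : Fin k × Fin r | v.1 ≠ i} : Finset _) = ({i}ᶜ : Finset (Fin k)) ×ˢ univ := by
    ext v; simp
  rw [this, card_product, card_compl]
  simp

theorem MinDegreeGE.le_ncard_coveringVertices_add {G : SimpleGraph (Fin k × Fin r)}
    [DecidableRel G.Adj] {d : ℝ} (hδ : MinDegreeGE G d) (i : Fin k) :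
    ((k : ℝ) - 1) * r + r * (d + 1) ≤ (coveringVertices G i).ncard + r * (k * r) := by
  have hcount := card_add_sum_degree_le G {v | v.1 ≠ i} (fun j => (i, j)) (by simp)
  rw [card_filter_fst_ne] at hcount
  have hdeg : ∀ j, d ≤ G.degree (i, j) := fun j =>
    (G.ncard_neighborSet_eq_degree (i, j)) ▸ hδ (i, j)
  calc ((k : ℝ) - 1) * r + r * (d + 1)
      ≤ (((k - 1) * r + ∑ j : Fin r, (G.degree (i, j) + 1) : ℕ) : ℝ) := by
        have : ∑ _j : Fin r, (d + 1) ≤ ∑ j : Fin r, ((G.degree (i, j) : ℝ) + 1) := by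
          gcongr with j; exact hdeg j
        simp only [sum_const, card_univ, Fintype.card_fin, nsmul_eq_mul] at this
        push_cast [Nat.cast_sub (Fin.pos i)]
        linarith
    _ ≤ _ := Nat.cast_le.2 hcount
    _ = (coveringVertices G i).ncard + r * (k * r) := by
        rw [← Set.ncard_coe_finset]
        push_cast
        congr 3 <;> first | (ext v; simp [coveringVertices]) | simp

theorem le_ncard_coveringVertices {G : SimpleGraph (Fin k × Fin r)} [DecidableRel G.Adj]
    {γ : ℝ} (hr : 0 < r) (hδ : MinDegreeGE G ((((r : ℝ) - 1) / r + γ / 2) * (k * r)))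
    (i : Fin k) : γ / 2 * (k * r) * r ≤ (coveringVertices G i).ncard := by
  have h := hδ.le_ncard_coveringVertices_add i
  rw [minDegree_threshold_eq (by positivity)] at h
  nlinarith

theorem ncard_neighborSet_graphB_le (v : Fin k × Fin r) :
    ((graphB k r).neighborSet v).ncard ≤ 3 * (r - 1) := by
  classical
  set near : Finset (Fin k) := {c | ((v.1 : ℤ) - c).natAbs ≤ 1}
  have hsub : (graphB k r).neighborSet v ⊆ ↑(near ×ˢ ({v.2}ᶜ : Finset (Fin r))) := by
    rintro u ⟨-, h⟩
    simp only [coe_product, coe_compl, coe_singleton, Set.mem_prod, Set.mem_compl_iff,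
      Set.mem_singleton_iff, coe_filter, mem_univ, true_and, Set.mem_ofPred_eq, near]
    rcases h with ⟨h1, h2⟩ | ⟨h1, h2⟩
    · exact ⟨h1, Ne.symm h2⟩
    · exact ⟨by omega, h2⟩
  have hnear : #near ≤ 3 := by
    calc #near ≤ #(Icc ((v.1 : ℕ) - 1) (v.1 + 1)) :=
          card_le_card_of_injOn Fin.val (fun c hc => by
            simp only [coe_filter, mem_univ, true_and, Set.mem_ofPred_eq, near] at hc
            simp only [coe_Icc, Set.mem_Icc]
            omega) Fin.val_injective.injOn
      _ ≤ 3 := by simp only [Nat.card_Icc]; omega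
  calc _ ≤ #(near ×ˢ ({v.2}ᶜ : Finset (Fin r))) := by
        rw [← Set.ncard_coe_finset]; exact Set.ncard_le_ncard hsub
    _ ≤ 3 * (r - 1) := by
        rw [card_product, card_compl, card_singleton, Fintype.card_fin]
        exact Nat.mul_le_mul_right _ hnear

theorem MinDegreeGE.mul_lt_two {G : SimpleGraph (Fin k × Fin r)} {γ : ℝ}
    (hδ : MinDegreeGE G ((((r : ℝ) - 1) / r + γ / 2) * (k * r))) (v : Fin k × Fin r) :
    γ * r < 2 := by
  classical
  have hdeg : ((G.degree v : ℕ) : ℝ) < k * r := by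
    exact_mod_cast (by simpa using G.degree_lt_card_verts v : G.degree v < k * r)
  have h := hδ v
  rw [G.ncard_neighborSet_eq_degree] at h
  have hr : (0 : ℝ) < r := by exact_mod_cast Fin.pos v.2
  rw [minDegree_threshold_eq hr.ne'] at h
  nlinarith

theorem exists_hub_choice {G : SimpleGraph (Fin k × Fin r)} [DecidableRel G.Adj] {γ : ℝ}
    (hr : 0 < r) (hγ : 0 < γ) (hδ : MinDegreeGE G ((((r : ℝ) - 1) / r + γ / 2) * (k * r))) :
    ∃ s : Fin k → Fin k × Fin r, (∀ i, s i ∈ coveringVertices G i) ∧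
      ∀ v, (#{i | s i = v} * r : ℝ) ≤ 2 / γ + 2 := by
  classical
  set t := ⌈2 / (γ * r ^ 2)⌉₊
  have hcard : ∀ i, Fintype.card (Fin k) ≤ t * #(coveringVertices G i).toFinset := by
    intro i
    have hrR : (r : ℝ) ≠ 0 := by positivity
    have : (k : ℝ) ≤ t * (coveringVertices G i).ncard :=
      calc (k : ℝ) = 2 / (γ * r ^ 2) * (γ / 2 * (k * r) * r) := by field_simp
        _ ≤ t * (coveringVertices G i).ncard := by
          gcongr
          · exact Nat.le_ceil _
          · exact le_ncard_coveringVertices hr hδ i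
    rw [Set.ncard_eq_toFinset_card'] at this
    simpa using (by exact_mod_cast this : k ≤ t * #(coveringVertices G i).toFinset)
  obtain ⟨s, hs, hfiber⟩ := exists_mem_card_fiber_le _ t hcard
  refine ⟨s, fun i => Set.mem_toFinset.1 (hs i), fun v => ?_⟩
  have hγr := hδ.mul_lt_two v
  calc (#{i | s i = v} * r : ℝ) ≤ t * r := by gcongr; exact_mod_cast hfiber v
    _ ≤ 2 / γ + 2 := natCeil_two_div_mul_le hγ (by exact_mod_cast hr) hγr.le

end Grid

theorem reduced_graph_trim_general (r k : ℕ) (hr : 0 < r) (γ : ℝ) (hγ : 0 < γ)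
    (Rt : SimpleGraph (Fin k × Fin r)) (hB : graphB k r ≤ Rt)
    (hδ : MinDegreeGE Rt ((((r : ℝ) - 1) / (r : ℝ) + γ / 2) * ((k : ℝ) * r))) :
    -- (i) every column is covered by many vertices
    (∀ i : Fin k, γ / 2 * ((k : ℝ) * r) ≤
      (Set.ncard {v : Fin k × Fin r | v.1 ≠ i ∧ ∀ j : Fin r, Rt.Adj v (i, j)} : ℝ)) ∧
    -- (ii) the bounded-degree subgraph R
    (∃ R : SimpleGraph (Fin k × Fin r), R ≤ Rt ∧ graphB k r ≤ R ∧
      MaxDegreeLE R (3 * (r : ℝ) + 2 / γ) ∧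
      ∀ i : Fin k, ∃ s : Fin k × Fin r, s.1 ≠ i ∧ ∀ j : Fin r, R.Adj s (i, j)) := by
  classical
  obtain ⟨s, hs, hfiber⟩ := exists_hub_choice hr hγ hδ
  refine ⟨fun i => ?_, graphB k r ⊔ hubGraph s, sup_le hB (hubGraph_le s fun i => (hs i).2),
    le_sup_left, fun v => ?_, fun i => ⟨s i, (hs i).1, fun j => Or.inr (hubGraph_adj s (hs i).1 j)⟩⟩
  · calc γ / 2 * ((k : ℝ) * r) ≤ γ / 2 * (k * r) * r :=
          le_mul_of_one_le_right (by positivity) (by exact_mod_cast hr)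
      _ ≤ _ := le_ncard_coveringVertices hr hδ i
  · have hdeg : ((graphB k r ⊔ hubGraph s).neighborSet v).ncard ≤
        3 * (r - 1) + (1 + #{i | s i = v} * r) := by
      have hH := ncard_neighborSet_hubGraph_le s v
      rw [Fintype.card_fin] at hH
      exact (Set.ncard_union_le _ _).trans (add_le_add (ncard_neighborSet_graphB_le v) hH)
    have hdegR := (Nat.cast_le (α := ℝ)).2 hdeg
    push_cast [Nat.cast_sub hr] at hdegR
    linarith [hfiber v]

/-- trimming a dense reduced graph `R̃ ⊇ B_k^r` to a bounded-degree
subgraph `R` that still covers every column. -/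
theorem reduced_graph_trim (r k : ℕ) (hr : 0 < r) (hk : 0 < k) (γ : ℝ) (hγ : 0 < γ)
    (Rt : SimpleGraph (Fin k × Fin r)) (hB : graphB k r ≤ Rt)
    (hδ : MinDegreeGE Rt ((((r : ℝ) - 1) / (r : ℝ) + γ / 2) * ((k : ℝ) * r))) :
    -- (i) every column is covered by many vertices
    (∀ i : Fin k, γ / 2 * ((k : ℝ) * r) ≤
      (Set.ncard {v : Fin k × Fin r | v.1 ≠ i ∧ ∀ j : Fin r, Rt.Adj v (i, j)} : ℝ)) ∧
    -- (ii) the bounded-degree subgraph R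
    (∃ R : SimpleGraph (Fin k × Fin r), R ≤ Rt ∧ graphB k r ≤ R ∧
      MaxDegreeLE R (3 * (r : ℝ) + 2 / γ) ∧
      ∀ i : Fin k, ∃ s : Fin k × Fin r, s.1 ≠ i ∧ ∀ j : Fin r, R.Adj s (i, j)) :=
  reduced_graph_trim_general r k hr γ hγ Rt hB hδ

end Paper
end
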